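/- arXiv:1904.03322 — 2 statements merged into one kernel-verified Lean document; each statement's English description precedes it below -/
import Mathlib

section
/- An allocation x and price curves g form a price curve equilibrium if and only if all of the following hold: (1) for every agent i, x_{ij} = w_{ij}·u_i(x_i) whenever g_j is not identically zero; (2) for every agent i, C_g(x_i) = Σ_j g_j(x_{ij}) = 1; and (3) for every good j, Σ_i x_{ij} ≤ s_j, with Σ_i x_{ij} = s_j whenever g_j is not identically zero. -/
open scoped Classical
open Real

namespace BandwidthAlloc

/-- A bid: `none` denotes the special bid β; `some r` denotes the real bid `r ≥ 0`. -/
abbrev Bid := Option NNReal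

/-- Numeric value of a bid (β is treated as 0 in arithmetic). -/
noncomputable def bval (b : Bid) : ℝ := ((b.getD 0 : NNReal) : ℝ)

/-- A bid is positive when it is neither 0 nor β. -/
def posBid (b : Bid) : Prop := 0 < bval b

/-- Utility of the bundle `xi` for an agent with desired set `Ri`: `min_{j ∈ Ri} xi j`. -/
noncomputable def bundleUtil {m : ℕ} (Ri : Finset (Fin m)) (xi : Fin m → ℝ) : ℝ :=
  sInf (xi '' (Ri : Set (Fin m)))

/-- Bandwidth-allocation utility of agent `i` under allocation `x`. -/
noncomputable def util {n m : ℕ} (R : Fin n → Finset (Fin m))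
    (x : Fin n → Fin m → ℝ) (i : Fin n) : ℝ :=
  bundleUtil (R i) (x i)

/-- Weights: `w R i j = 1` iff `j ∈ R i`, else `0`. -/
noncomputable def w {n m : ℕ} (R : Fin n → Finset (Fin m)) (i : Fin n) (j : Fin m) : ℝ :=
  if j ∈ R i then 1 else 0

/-- A valid (nonnegative, supply-respecting) allocation. -/
def validAlloc {n m : ℕ} (s : Fin m → ℝ) (x : Fin n → Fin m → ℝ) : Prop :=
  (∀ i j, 0 ≤ x i j) ∧ ∀ j, ∑ i, x i j ≤ s j

/-- CES welfare of the utility vector `v` (`ρ = 0` is Nash welfare; for `ρ < 0` a zero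
utility yields welfare `0`, the limiting convention). -/
noncomputable def ces (ρ : ℝ) {n : ℕ} (v : Fin n → ℝ) : ℝ :=
  if ρ = 0 then ∏ i, v i
  else if ρ < 0 ∧ ∃ i, v i = 0 then 0
  else (∑ i, v i ^ ρ) ^ (1 / ρ)

/-- `Ψ_ρ`: `x` is a valid allocation maximizing CES welfare among valid allocations. -/
def maxCES (ρ : ℝ) {n m : ℕ} (s : Fin m → ℝ) (R : Fin n → Finset (Fin m))
    (x : Fin n → Fin m → ℝ) : Prop :=
  validAlloc s x ∧ ∀ y, validAlloc s y → ces ρ (util R y) ≤ ces ρ (util R x)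

/-- Constraint curve: continuous, normalized, strictly increasing, nonnegative on `[0,∞)`. -/
def IsConstraintCurve (f : ℝ → ℝ) : Prop :=
  ContinuousOn f (Set.Ici 0) ∧ f 0 = 0 ∧ StrictMonoOn f (Set.Ici 0) ∧
    ∀ y ∈ Set.Ici (0 : ℝ), 0 ≤ f y

/-- `g` is identically zero on `[0,∞)`. -/
def zeroOn (g : ℝ → ℝ) : Prop := ∀ y ∈ Set.Ici (0 : ℝ), g y = 0

/-- Price curve: continuous, normalized, nonnegative, and either strictly increasing or
identically zero on `[0,∞)`. -/
def IsPriceCurve (g : ℝ → ℝ) : Prop :=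
  ContinuousOn g (Set.Ici 0) ∧ g 0 = 0 ∧ (∀ y ∈ Set.Ici (0 : ℝ), 0 ≤ g y) ∧
    (StrictMonoOn g (Set.Ici 0) ∨ zeroOn g)

/-- Cost of the bundle `xi` under price curves `g`. -/
noncomputable def cost {m : ℕ} (g : Fin m → ℝ → ℝ) (xi : Fin m → ℝ) : ℝ :=
  ∑ j, g j (xi j)

/-- `xi` is in the demand set of an agent with desired set `Ri` under price curves `g`. -/
def inDemand {m : ℕ} (g : Fin m → ℝ → ℝ) (Ri : Finset (Fin m)) (xi : Fin m → ℝ) : Prop :=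
  (∀ j, 0 ≤ xi j) ∧ cost g xi ≤ 1 ∧
    ∀ yi : Fin m → ℝ, (∀ j, 0 ≤ yi j) → cost g yi ≤ 1 → bundleUtil Ri yi ≤ bundleUtil Ri xi

/-- Price curve equilibrium. -/
def isPCE {n m : ℕ} (s : Fin m → ℝ) (R : Fin n → Finset (Fin m))
    (x : Fin n → Fin m → ℝ) (g : Fin m → ℝ → ℝ) : Prop :=
  (∀ i, inDemand g (R i) (x i)) ∧ (∀ j, ∑ i, x i j ≤ s j) ∧
    ∀ j, ¬ zeroOn (g j) → ∑ i, x i j = s j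

/-- Step 1 of the ATP allocation rule: proportional sharing. -/
noncomputable def atp1 {n m : ℕ} (s : Fin m → ℝ) (b : Fin n → Fin m → Bid)
    (i : Fin n) (j : Fin m) : ℝ :=
  bval (b i j) / (∑ k, bval (b k j)) * s j

/-- Steps 1–2 of the ATP allocation rule: goods with a positive bid are shared
proportionally; on a good where everyone bids `0` or `β`, an agent bidding `β` receives
as much as she receives of some fixed good on which she bids positively. -/
noncomputable def atp2 {n m : ℕ} (s : Fin m → ℝ) (b : Fin n → Fin m → Bid)
    (i : Fin n) (j : Fin m) : ℝ :=
  if ∃ k, posBid (b k j) then atp1 s b i j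
  else if b i j = none then
    (if h : ∃ ℓ, posBid (b i ℓ) then atp1 s b i (Classical.choose h) else 0)
  else 0

/-- The full ATP allocation rule (steps 1–3): agents bidding `β` on an oversubscribed
step-2 good are penalized with the zero bundle. -/
noncomputable def atp {n m : ℕ} (s : Fin m → ℝ) (b : Fin n → Fin m → Bid)
    (i : Fin n) (j : Fin m) : ℝ :=
  if ∃ ℓ, (¬ ∃ k, posBid (b k ℓ)) ∧ b i ℓ = none ∧ s ℓ < ∑ k, atp2 s b k ℓ then 0
  else atp2 s b i j

/-- Total bid-constraint cost `C_f(b_i)` of agent `i`'s bid vector. -/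
noncomputable def bidCost {m : ℕ} (f : Fin m → ℝ → ℝ) (bi : Fin m → Bid) : ℝ :=
  ∑ j, f j (bval (bi j))

/-- A bid vector is feasible if it obeys the bid constraint `C_f(b_i) ≤ 1`. -/
def feasibleBid {m : ℕ} (f : Fin m → ℝ → ℝ) (bi : Fin m → Bid) : Prop :=
  bidCost f bi ≤ 1

/-- `b` is a Nash equilibrium of `ATP(f)`: all bids are feasible and no agent can
strictly increase her utility by a unilateral feasible deviation. -/
def isNE {n m : ℕ} (s : Fin m → ℝ) (f : Fin m → ℝ → ℝ)
    (R : Fin n → Finset (Fin m)) (b : Fin n → Fin m → Bid) : Prop :=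
  (∀ i, feasibleBid f (b i)) ∧
    ∀ (i : Fin n) (bi' : Fin m → Bid), feasibleBid f bi' →
      util R (atp s (Function.update b i bi')) i ≤ util R (atp s b) i

/-- `NE_X(ATP(f))`: allocations arising from Nash equilibrium bid profiles. -/
def NEX {n m : ℕ} (s : Fin m → ℝ) (f : Fin m → ℝ → ℝ)
    (R : Fin n → Finset (Fin m)) : Set (Fin n → Fin m → ℝ) :=
  {x | ∃ b, isNE s f R b ∧ x = atp s b}

/-- `f` is homogeneous of degree `α` on the nonnegative reals. -/
def Homog (f : ℝ → ℝ) (α : ℝ) : Prop :=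
  ∀ c ≥ (0 : ℝ), ∀ y ≥ (0 : ℝ), f (c * y) = c ^ α * f y

/-- `γ* = max {γ ≥ 0 : γ · Σ_i w_{ij} ≤ s_j for all j}` of Mechanism 1. -/
noncomputable def gammaStar {n m : ℕ} (s : Fin m → ℝ) (R : Fin n → Finset (Fin m)) : ℝ :=
  sSup {γ : ℝ | 0 ≤ γ ∧ ∀ j, γ * ∑ i, w R i j ≤ s j}

/-- Mechanism 1: `x i j = γ* · w i j`. -/
noncomputable def mech1 {n m : ℕ} (s : Fin m → ℝ) (R : Fin n → Finset (Fin m)) :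
    Fin n → Fin m → ℝ :=
  fun i j => gammaStar s R * w R i j

/-- `min_i u_i(x_i)`. -/
noncomputable def minUtil {n m : ℕ} (R : Fin n → Finset (Fin m))
    (x : Fin n → Fin m → ℝ) : ℝ :=
  sInf (Set.range fun i => util R x i)

/-- `x` is maxmin-optimal: valid and attaining the maximum of `min_i u_i` over valid
allocations. -/
def maxminOptimal {n m : ℕ} (s : Fin m → ℝ) (R : Fin n → Finset (Fin m))
    (x : Fin n → Fin m → ℝ) : Prop :=
  validAlloc s x ∧ ∀ y, validAlloc s y → minUtil R y ≤ minUtil R x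

/-- Mechanism 2: `P i k` is the set agent `i` claims agent `k` desires.
`eta P i = |{k : R_k(k) ≠ R_k(i)}|`. -/
noncomputable def eta {n m : ℕ} (P : Fin n → Fin n → Finset (Fin m)) (i : Fin n) : ℕ :=
  (Finset.univ.filter fun k => P k k ≠ P i k).card

/-- Agent `i` is in `N̄`: for some `k`, `R_k(k) ⊊ R_k(i)`. -/
def inNbar {n m : ℕ} (P : Fin n → Fin n → Finset (Fin m)) (i : Fin n) : Prop :=
  ∃ k, P k k ⊂ P i k

/-- The penalty factor `α_i` of Mechanism 2. -/
noncomputable def alpha {n m : ℕ} (P : Fin n → Fin n → Finset (Fin m)) (i : Fin n) : ℝ :=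
  if inNbar P i then 0 else 1 - (eta P i : ℝ) / n

/-- Effective reported sets of Mechanism 2: agents in `N̄` are replaced by `∅`. -/
noncomputable def effSets {n m : ℕ} (P : Fin n → Fin n → Finset (Fin m)) :
    Fin n → Finset (Fin m) :=
  fun i => if inNbar P i then ∅ else P i i

/-- Mechanism 2: the allocation `x_i = α_i · y_i` where `y` is the Mechanism 1 outcome
on the effective sets. -/
noncomputable def mech2 {n m : ℕ} (s : Fin m → ℝ) (P : Fin n → Fin n → Finset (Fin m)) :
    Fin n → Fin m → ℝ :=
  fun i j => alpha P i * mech1 s (effSets P) i j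

/-! Adding a small `ε` to every coordinate of a bundle that leaves money unspent strictly
raises its Leontief utility while keeping it affordable, so any bundle at least as good as a
demanded one costs at least the whole budget. Applied to the cheapest bundle with the same
utility, which lies below the demanded one, this forces the demanded bundle to cost exactly 1
and to coincide with that cheapest bundle on every priced good. Conversely, such a bundle
cannot be beaten: a strictly better bundle buys strictly more of every desired good, and
some desired good is priced since the budget is spent. -/

section Bundles

variable {m : ℕ}

/-- The cheapest bundle of Leontief utility `u` for the desired set `Ri`. -/
noncomputable def leontiefBundle (Ri : Finset (Fin m)) (u : ℝ) : Fin m → ℝ :=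
  fun j => if j ∈ Ri then u else 0

lemma bundleUtil_le {Ri : Finset (Fin m)} (xi : Fin m → ℝ) {j : Fin m} (hj : j ∈ Ri) :
    bundleUtil Ri xi ≤ xi j :=
  csInf_le (Ri.finite_toSet.image xi).bddBelow ⟨j, hj, rfl⟩

lemma le_bundleUtil {Ri : Finset (Fin m)} (hRi : Ri.Nonempty) {xi : Fin m → ℝ} {c : ℝ}
    (h : ∀ j ∈ Ri, c ≤ xi j) : c ≤ bundleUtil Ri xi :=
  le_csInf ((Finset.coe_nonempty.mpr hRi).image xi) (by rintro _ ⟨j, hj, rfl⟩; exact h j hj)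

lemma bundleUtil_nonneg {Ri : Finset (Fin m)} (hRi : Ri.Nonempty) {xi : Fin m → ℝ}
    (hxi : ∀ j, 0 ≤ xi j) : 0 ≤ bundleUtil Ri xi :=
  le_bundleUtil hRi fun j _ => hxi j

lemma bundleUtil_add_le {Ri : Finset (Fin m)} (hRi : Ri.Nonempty) (xi : Fin m → ℝ) (ε : ℝ) :
    bundleUtil Ri xi + ε ≤ bundleUtil Ri (fun j => xi j + ε) :=
  le_bundleUtil hRi fun j hj => by linarith [bundleUtil_le xi hj]

lemma le_bundleUtil_leontiefBundle {Ri : Finset (Fin m)} (hRi : Ri.Nonempty) (u : ℝ) :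
    u ≤ bundleUtil Ri (leontiefBundle Ri u) :=
  le_bundleUtil hRi fun j hj => by simp [leontiefBundle, hj]

lemma leontiefBundle_nonneg (Ri : Finset (Fin m)) {u : ℝ} (hu : 0 ≤ u) (j : Fin m) :
    0 ≤ leontiefBundle Ri u j := by
  unfold leontiefBundle; split_ifs <;> simp [hu]

lemma leontiefBundle_bundleUtil_le {Ri : Finset (Fin m)} {xi : Fin m → ℝ}
    (hxi : ∀ j, 0 ≤ xi j) (j : Fin m) : leontiefBundle Ri (bundleUtil Ri xi) j ≤ xi j := by
  unfold leontiefBundle; split_ifs with hj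
  exacts [bundleUtil_le xi hj, hxi j]

lemma leontiefBundle_lt_of_lt_bundleUtil {Ri : Finset (Fin m)} {xi : Fin m → ℝ} {u : ℝ}
    (hu : u < bundleUtil Ri xi) {j : Fin m} (hj : j ∈ Ri) : leontiefBundle Ri u j < xi j := by
  simpa [leontiefBundle, hj] using hu.trans_le (bundleUtil_le xi hj)

lemma w_mul_eq_leontiefBundle {n : ℕ} (R : Fin n → Finset (Fin m)) (i : Fin n) (j : Fin m)
    (u : ℝ) : w R i j * u = leontiefBundle (R i) u j := by
  unfold w leontiefBundle; split_ifs <;> simp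

end Bundles

section Prices

variable {m : ℕ} {g : Fin m → ℝ → ℝ}

lemma IsPriceCurve.monotoneOn {f : ℝ → ℝ} (hf : IsPriceCurve f) : MonotoneOn f (Set.Ici 0) :=
  hf.2.2.2.elim StrictMonoOn.monotoneOn fun h _ hx _ hy _ => by rw [h _ hx, h _ hy]

lemma IsPriceCurve.strictMonoOn {f : ℝ → ℝ} (hf : IsPriceCurve f) (h : ¬ zeroOn f) :
    StrictMonoOn f (Set.Ici 0) :=
  hf.2.2.2.resolve_right h

lemma cost_le_cost (hg : ∀ j, IsPriceCurve (g j)) {a b : Fin m → ℝ} (ha : ∀ j, 0 ≤ a j)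
    (hab : ∀ j, a j ≤ b j) : cost g a ≤ cost g b :=
  Finset.sum_le_sum fun j _ => (hg j).monotoneOn (ha j) ((ha j).trans (hab j)) (hab j)

lemma cost_lt_cost (hg : ∀ j, IsPriceCurve (g j)) {a b : Fin m → ℝ} (ha : ∀ j, 0 ≤ a j)
    (hab : ∀ j, a j ≤ b j) {j : Fin m} (hj : ¬ zeroOn (g j)) (hlt : a j < b j) :
    cost g a < cost g b :=
  Finset.sum_lt_sum (fun k _ => (hg k).monotoneOn (ha k) ((ha k).trans (hab k)) (hab k))
    ⟨j, Finset.mem_univ j, (hg j).strictMonoOn hj (ha j) ((ha j).trans (hab j)) hlt⟩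

lemma cost_congr {a b : Fin m → ℝ} (ha : ∀ j, 0 ≤ a j) (hb : ∀ j, 0 ≤ b j)
    (hab : ∀ j, ¬ zeroOn (g j) → a j = b j) : cost g a = cost g b := by
  refine Finset.sum_congr rfl fun j _ => ?_
  by_cases hj : zeroOn (g j)
  · rw [hj _ (ha j), hj _ (hb j)]
  · rw [hab j hj]

lemma cost_leontiefBundle_eq_zero (hg : ∀ j, IsPriceCurve (g j)) {Ri : Finset (Fin m)}
    (hRi : ∀ j ∈ Ri, zeroOn (g j)) {u : ℝ} (hu : 0 ≤ u) : cost g (leontiefBundle Ri u) = 0 :=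
  Finset.sum_eq_zero fun j _ => by
    by_cases hj : j ∈ Ri
    · simpa [leontiefBundle, hj] using hRi j hj u hu
    · simpa [leontiefBundle, hj] using (hg j).2.1

lemma continuousOn_cost_add (hg : ∀ j, IsPriceCurve (g j)) {a : Fin m → ℝ}
    (ha : ∀ j, 0 ≤ a j) : ContinuousOn (fun ε => cost g (fun j => a j + ε)) (Set.Ici 0) :=
  continuousOn_finsetSum _ fun j _ =>
    (hg j).1.comp (continuousOn_const.add continuousOn_id) fun ε (hε : 0 ≤ ε) =>
      show 0 ≤ a j + ε by linarith [ha j]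

lemma exists_pos_cost_add_le_one (hg : ∀ j, IsPriceCurve (g j)) {a : Fin m → ℝ}
    (ha : ∀ j, 0 ≤ a j) (h : cost g a < 1) : ∃ ε > 0, cost g (fun j => a j + ε) ≤ 1 := by
  have hcont : ContinuousWithinAt (fun ε => cost g (fun j => a j + ε)) (Set.Ioi 0) 0 :=
    ((continuousOn_cost_add hg ha) 0 Set.self_mem_Ici).mono Set.Ioi_subset_Ici_self
  have hlt : ∀ᶠ ε in nhdsWithin 0 (Set.Ioi 0), cost g (fun j => a j + ε) < 1 :=
    hcont.eventually_lt continuousWithinAt_const (by simpa using h)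
  obtain ⟨ε, hε1, hε⟩ := (hlt.and self_mem_nhdsWithin).exists
  exact ⟨ε, hε, hε1.le⟩

end Prices

section Demand

variable {m : ℕ} {g : Fin m → ℝ → ℝ} {Ri : Finset (Fin m)} {xi : Fin m → ℝ}

lemma exists_bundleUtil_lt_of_cost_lt_one (hg : ∀ j, IsPriceCurve (g j)) (hRi : Ri.Nonempty)
    {a : Fin m → ℝ} (ha : ∀ j, 0 ≤ a j) (h : cost g a < 1) :
    ∃ b : Fin m → ℝ, (∀ j, 0 ≤ b j) ∧ cost g b ≤ 1 ∧ bundleUtil Ri a < bundleUtil Ri b := by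
  obtain ⟨ε, hε, hcost⟩ := exists_pos_cost_add_le_one hg ha h
  exact ⟨_, fun j => add_nonneg (ha j) hε.le, hcost,
    by linarith [bundleUtil_add_le hRi a ε]⟩

lemma inDemand.one_le_cost (hg : ∀ j, IsPriceCurve (g j)) (hRi : Ri.Nonempty)
    (hxi : inDemand g Ri xi) {a : Fin m → ℝ} (ha : ∀ j, 0 ≤ a j)
    (hle : bundleUtil Ri xi ≤ bundleUtil Ri a) : 1 ≤ cost g a := by
  by_contra! h
  obtain ⟨b, hb, hbcost, hlt⟩ := exists_bundleUtil_lt_of_cost_lt_one hg hRi ha h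
  linarith [hxi.2.2 b hb hbcost]

lemma inDemand_iff (hg : ∀ j, IsPriceCurve (g j)) (hRi : Ri.Nonempty) (hxi : ∀ j, 0 ≤ xi j) :
    inDemand g Ri xi ↔
      (∀ j, ¬ zeroOn (g j) → xi j = leontiefBundle Ri (bundleUtil Ri xi) j) ∧
        cost g xi = 1 := by
  set u := bundleUtil Ri xi
  have hu : 0 ≤ u := bundleUtil_nonneg hRi hxi
  have htnn := leontiefBundle_nonneg Ri hu
  have hle : ∀ j, leontiefBundle Ri u j ≤ xi j := leontiefBundle_bundleUtil_le hxi
  constructor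
  · intro hdem
    have hone : 1 ≤ cost g (leontiefBundle Ri u) :=
      hdem.one_le_cost hg hRi htnn (le_bundleUtil_leontiefBundle hRi u)
    refine ⟨fun j hj => ?_, le_antisymm hdem.2.1 (hone.trans (cost_le_cost hg htnn hle))⟩
    by_contra hne
    have := cost_lt_cost hg htnn hle hj (lt_of_le_of_ne (hle j) (Ne.symm hne))
    linarith [hdem.2.1]
  · rintro ⟨htight, hcost⟩
    refine ⟨hxi, hcost.le, fun b hb hbcost => ?_⟩
    by_contra! hlt
    obtain ⟨j, hjR, hj⟩ : ∃ j ∈ Ri, ¬ zeroOn (g j) := by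
      by_contra! hzero
      have := cost_congr (g := g) hxi htnn htight
      rw [cost_leontiefBundle_eq_zero hg hzero hu, hcost] at this
      exact one_ne_zero this
    have htb : ∀ k, leontiefBundle Ri u k ≤ b k := fun k => by
      by_cases hk : k ∈ Ri
      · exact (leontiefBundle_lt_of_lt_bundleUtil hlt hk).le
      · simpa [leontiefBundle, hk] using hb k
    have := cost_lt_cost hg htnn htb hj (leontiefBundle_lt_of_lt_bundleUtil hlt hjR)
    rw [← cost_congr hxi htnn htight, hcost] at this
    linarith

end Demand

theorem pc_eq_general {n m : ℕ} (s : Fin m → ℝ)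
    (R : Fin n → Finset (Fin m)) (hR : ∀ i, (R i).Nonempty)
    (g : Fin m → ℝ → ℝ) (hg : ∀ j, IsPriceCurve (g j))
    (x : Fin n → Fin m → ℝ) (hxnn : ∀ i j, 0 ≤ x i j) :
    isPCE s R x g ↔
      ((∀ (i : Fin n) (j : Fin m), ¬ zeroOn (g j) →
          x i j = w R i j * util R x i) ∧
        (∀ i, cost g (x i) = 1) ∧
        (∀ j, ∑ i, x i j ≤ s j) ∧
        ∀ j, ¬ zeroOn (g j) → ∑ i, x i j = s j) := by
  have hdemand : ∀ i, inDemand g (R i) (x i) ↔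
      (∀ j, ¬ zeroOn (g j) → x i j = w R i j * util R x i) ∧ cost g (x i) = 1 := fun i => by
    simpa only [w_mul_eq_leontiefBundle, util] using inDemand_iff hg (hR i) (hxnn i)
  simp only [isPCE, hdemand, forall_and]
  tauto

/-- Lemma pc-eq: `(x, g)` is a price curve equilibrium iff
(1) `x_{ij} = w_{ij}·u_i(x_i)` whenever `g_j` is not identically zero;
(2) `C_g(x_i) = 1` for every agent; and
(3) supply is respected, with equality whenever `g_j` is not identically zero. -/
theorem pc_eq {n m : ℕ} (s : Fin m → ℝ) (hs : ∀ j, 0 < s j)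
    (R : Fin n → Finset (Fin m)) (hR : ∀ i, (R i).Nonempty)
    (g : Fin m → ℝ → ℝ) (hg : ∀ j, IsPriceCurve (g j))
    (x : Fin n → Fin m → ℝ) (hxnn : ∀ i j, 0 ≤ x i j) :
    isPCE s R x g ↔
      ((∀ (i : Fin n) (j : Fin m), ¬ zeroOn (g j) →
          x i j = w R i j * util R x i) ∧
        (∀ i, cost g (x i) = 1) ∧
        (∀ j, ∑ i, x i j ≤ s j) ∧
        ∀ j, ¬ zeroOn (g j) → ∑ i, x i j = s j) :=
  pc_eq_general s R hR g hg x hxnn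

end BandwidthAlloc
end

section
/- Let a_1,…,a_m be positive constants and let f be constraint curves where each f_j is homogeneous of degree α_j > 0. Define constraint curves f' by f'_j(b) = a_j·f_j(b). Then the set of Nash equilibrium allocations of ATP(f) equals that of ATP(f'), i.e., NE_X(ATP(f)) = NE_X(ATP(f')). -/
open scoped Classical
open Real

namespace BandwidthAlloc

/-!
For `c_j = a_j ^ (-1/α_j)` homogeneity gives `a_j f_j (c_j b) = f_j b`, so multiplying every bid
on good `j` by `c_j` is a bijection between the feasible bids of `ATP(f)` and those of `ATP(f')`.
The allocation rule sees only the ratios of the bids on each good and which bids are `β`, so this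
bijection preserves allocations and hence Nash equilibria.
-/

noncomputable def scaleBid (c : NNReal) (b : Bid) : Bid := b.map (c * ·)

noncomputable def scaleBids {m : ℕ} (c : Fin m → NNReal) (bi : Fin m → Bid) : Fin m → Bid :=
  fun j => scaleBid (c j) (bi j)

lemma bval_nonneg (b : Bid) : 0 ≤ bval b := (b.getD 0).coe_nonneg

lemma bval_scaleBid (c : NNReal) (b : Bid) : bval (scaleBid c b) = c * bval b := by
  cases b with
  | none => exact (mul_zero _).symm
  | some r => exact NNReal.coe_mul c r

lemma scaleBid_eq_none {c : NNReal} {b : Bid} : scaleBid c b = none ↔ b = none :=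
  Option.map_eq_none_iff

lemma posBid_scaleBid {c : NNReal} (hc : c ≠ 0) (b : Bid) :
    posBid (scaleBid c b) ↔ posBid b := by
  rw [posBid, posBid, bval_scaleBid]
  exact mul_pos_iff_of_pos_left (by positivity)

lemma scaleBid_scaleBid_inv {c : NNReal} (hc : c ≠ 0) (b : Bid) :
    scaleBid c (scaleBid c⁻¹ b) = b := by
  cases b with
  | none => rfl
  | some r => exact congrArg some (mul_inv_cancel_left₀ hc r)

lemma scaleBids_scaleBids_inv {m : ℕ} {c : Fin m → NNReal} (hc : ∀ j, c j ≠ 0)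
    (bi : Fin m → Bid) : scaleBids c (scaleBids c⁻¹ bi) = bi :=
  funext fun j => scaleBid_scaleBid_inv (hc j) (bi j)

lemma bidCost_scaleBids {m : ℕ} {f g : Fin m → ℝ → ℝ} {c : Fin m → NNReal}
    (hfg : ∀ j y, 0 ≤ y → g j (c j * y) = f j y) (bi : Fin m → Bid) :
    bidCost g (scaleBids c bi) = bidCost f bi :=
  Finset.sum_congr rfl fun j _ => by
    rw [scaleBids, bval_scaleBid, hfg j _ (bval_nonneg _)]

section Invariance

variable {n m : ℕ} (s : Fin m → ℝ) {c : Fin m → NNReal}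

lemma atp1_scaleBids (hc : ∀ j, c j ≠ 0) (b : Fin n → Fin m → Bid) (i : Fin n) (j : Fin m) :
    atp1 s (scaleBids c ∘ b) i j = atp1 s b i j := by
  simp only [atp1, Function.comp_apply, scaleBids, bval_scaleBid, ← Finset.mul_sum]
  rw [mul_div_mul_left _ _ (NNReal.coe_ne_zero.mpr (hc j))]

lemma atp2_scaleBids (hc : ∀ j, c j ≠ 0) (b : Fin n → Fin m → Bid) :
    atp2 s (scaleBids c ∘ b) = atp2 s b := by
  funext i j
  simp only [atp2, atp1_scaleBids s hc, Function.comp_apply, scaleBids,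
    posBid_scaleBid (hc _), scaleBid_eq_none]

lemma atp_scaleBids (hc : ∀ j, c j ≠ 0) (b : Fin n → Fin m → Bid) :
    atp s (scaleBids c ∘ b) = atp s b := by
  funext i j
  simp only [atp, atp2_scaleBids s hc, Function.comp_apply, scaleBids,
    posBid_scaleBid (hc _), scaleBid_eq_none]

variable {R : Fin n → Finset (Fin m)} {f g : Fin m → ℝ → ℝ}

lemma isNE_scaleBids (hc : ∀ j, c j ≠ 0) (hfg : ∀ j y, 0 ≤ y → g j (c j * y) = f j y)
    {b : Fin n → Fin m → Bid} (hb : isNE s f R b) : isNE s g R (scaleBids c ∘ b) := by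
  obtain ⟨hfeas, hdev⟩ := hb
  refine ⟨fun i => (bidCost_scaleBids hfg (b i)).trans_le (hfeas i), fun i bi' hbi' => ?_⟩
  set bi := scaleBids c⁻¹ bi'
  have hbi : scaleBids c bi = bi' := scaleBids_scaleBids_inv hc bi'
  have hfeas_bi : feasibleBid f bi := by
    rw [feasibleBid, ← bidCost_scaleBids hfg, hbi]
    exact hbi'
  rw [← hbi, ← Function.comp_update, atp_scaleBids s hc, atp_scaleBids s hc]
  exact hdev i bi hfeas_bi

lemma NEX_subset_of_scale (hc : ∀ j, c j ≠ 0)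
    (hfg : ∀ j y, 0 ≤ y → g j (c j * y) = f j y) :
    NEX s f R ⊆ NEX s g R := by
  rintro x ⟨b, hb, rfl⟩
  exact ⟨scaleBids c ∘ b, isNE_scaleBids s hc hfg hb, (atp_scaleBids s hc b).symm⟩

theorem NEX_eq_of_scale (hc : ∀ j, c j ≠ 0)
    (hfg : ∀ j y, 0 ≤ y → g j (c j * y) = f j y) :
    NEX s f R = NEX s g R := by
  refine (NEX_subset_of_scale s hc hfg).antisymm (NEX_subset_of_scale s (c := c⁻¹)
    (fun j => inv_ne_zero (hc j)) fun j y hy => ?_)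
  rw [← hfg j _ (by positivity), Pi.inv_apply, NNReal.coe_inv, mul_inv_cancel_left₀]
  exact NNReal.coe_ne_zero.mpr (hc j)

end Invariance

lemma Homog.mul_apply_rpow_neg_inv_mul {f : ℝ → ℝ} {α a y : ℝ} (hf : Homog f α)
    (hα : α ≠ 0) (ha : 0 < a) (hy : 0 ≤ y) : a * f (a ^ (-α⁻¹) * y) = f y := by
  rw [hf _ (rpow_nonneg ha.le _) y hy, ← rpow_mul ha.le, neg_mul, inv_mul_cancel₀ hα,
    rpow_neg_one, mul_inv_cancel_left₀ ha.ne']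

theorem scaling_eq_general {n m : ℕ} (s : Fin m → ℝ)
    (R : Fin n → Finset (Fin m))
    (a : Fin m → ℝ) (ha : ∀ j, 0 < a j)
    (f : Fin m → ℝ → ℝ)
    (α : Fin m → ℝ) (hα : ∀ j, 0 < α j) (hhom : ∀ j, Homog (f j) (α j)) :
    NEX s f R = NEX s (fun j y => a j * f j y) R :=
  NEX_eq_of_scale s (c := fun j => ⟨a j ^ (-(α j)⁻¹), rpow_nonneg (ha j).le _⟩)
    (fun j => NNReal.coe_ne_zero.mp (rpow_pos_of_pos (ha j) _).ne')
    fun j _ hy => (hhom j).mul_apply_rpow_neg_inv_mul (hα j).ne' (ha j) hy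

/-- Lemma scaling: scaling homogeneous constraint curves by positive
constants does not change the set of Nash equilibrium allocations:
`NE_X(ATP(f)) = NE_X(ATP(f'))` where `f'_j(b) = a_j · f_j(b)`. -/
theorem scaling_eq {n m : ℕ} (s : Fin m → ℝ) (hs : ∀ j, 0 < s j)
    (R : Fin n → Finset (Fin m)) (hR : ∀ i, (R i).Nonempty)
    (a : Fin m → ℝ) (ha : ∀ j, 0 < a j)
    (f : Fin m → ℝ → ℝ) (hf : ∀ j, IsConstraintCurve (f j))
    (α : Fin m → ℝ) (hα : ∀ j, 0 < α j) (hhom : ∀ j, Homog (f j) (α j)) :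
    NEX s f R = NEX s (fun j y => a j * f j y) R :=
  scaling_eq_general s R a ha f α hα hhom

end BandwidthAlloc
end
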